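/- (Fannes–Audenaert inequality) Let D ≥ 2 and let ρ, σ be density matrices on ℂ^D with trace distance T(ρ, σ) = t. Then |S(ρ) − S(σ)| ≤ t·log₂(D−1) + h(t), where h is the binary entropy. -/

import Mathlib

open ComplexOrder

noncomputable def traceNorm {n : Type*} [Fintype n] [DecidableEq n]
    (A : Matrix n n ℂ) : ℝ :=
  ((Matrix.posSemidef_conjTranspose_mul_self A).1.eigenvectorUnitary.1 *
    Matrix.diagonal (((↑) : ℝ → ℂ) ∘ (Real.sqrt ∘ (Matrix.posSemidef_conjTranspose_mul_self A).1.eigenvalues)) *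
    (star (Matrix.posSemidef_conjTranspose_mul_self A).1.eigenvectorUnitary : Matrix n n ℂ)).trace.re

/-- Trace distance between matrices: half the trace norm of the difference. -/
noncomputable def traceDist {n : Type*} [Fintype n] [DecidableEq n]
    (ρ σ : Matrix n n ℂ) : ℝ :=
  traceNorm (ρ - σ) / 2

/-- A density matrix: positive semidefinite with trace one. -/
def IsDensityMatrix {n : Type*} [Fintype n] [DecidableEq n]
    (ρ : Matrix n n ℂ) : Prop :=
  ρ.PosSemidef ∧ ρ.trace = 1

/-- Binary entropy (base 2). -/
noncomputable def binEntropy (t : ℝ) : ℝ :=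
  -t * Real.logb 2 t - (1 - t) * Real.logb 2 (1 - t)

/-- Von Neumann entropy (base 2), via the eigenvalues of a Hermitian matrix. -/
noncomputable def vnEntropy {n : Type*} [Fintype n] [DecidableEq n]
    (ρ : Matrix n n ℂ) : ℝ :=
  if h : ρ.IsHermitian then -∑ i, h.eigenvalues i * Real.logb 2 (h.eigenvalues i) else 0

section Aux

open Real Finset

/-- Subadditivity of negMulLog over finite sums. -/
lemma negMulLog_sum_le {ι : Type*} (s : Finset ι) (p : ι → ℝ) (hp : ∀ i ∈ s, 0 ≤ p i) :
    Real.negMulLog (∑ i ∈ s, p i) ≤ ∑ i ∈ s, Real.negMulLog (p i) := by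
  have hS : ∀ i ∈ s, p i ≤ ∑ j ∈ s, p j := fun i hi => Finset.single_le_sum hp hi
  have h2 : ∀ i ∈ s, p i * Real.log (p i) ≤ p i * Real.log (∑ j ∈ s, p j) := by
    intro i hi
    rcases eq_or_lt_of_le (hp i hi) with h0 | h0
    · simp [← h0]
    · exact mul_le_mul_of_nonneg_left (Real.log_le_log h0 (hS i hi)) (le_of_lt h0)
  have h3 : Real.negMulLog (∑ i ∈ s, p i) = ∑ i ∈ s, -(p i * Real.log (∑ j ∈ s, p j)) := by
    rw [Real.negMulLog, Finset.sum_neg_distrib, ← Finset.sum_mul]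
    ring
  rw [h3]
  simp only [Real.negMulLog_eq_neg]
  exact Finset.sum_le_sum fun i hi => neg_le_neg (h2 i hi)

/-- Entropy is at most log of the number of outcomes. -/
lemma sum_negMulLog_le_log_card {ι : Type*} (s : Finset ι) (c : ι → ℝ) (n : ℕ) (hn : 1 ≤ n)
    (hcard : s.card ≤ n) (hc : ∀ i ∈ s, 0 ≤ c i) (hsum : ∑ i ∈ s, c i = 1) :
    ∑ i ∈ s, Real.negMulLog (c i) ≤ Real.log n := by
  have hn' : (0:ℝ) < n := by positivity
  have key : ∀ i ∈ s, Real.negMulLog (c i) ≤ c i * Real.log n + (1/n - c i) := by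
    intro i hi
    rcases eq_or_lt_of_le (hc i hi) with h0 | h0
    · rw [← h0]; simp [Real.negMulLog]
    · have hx : (0:ℝ) < 1/(n * c i) := by positivity
      have := Real.log_le_sub_one_of_pos hx
      have hlog : Real.log (1/(n * c i)) = -(Real.log n + Real.log (c i)) := by
        rw [one_div, Real.log_inv, Real.log_mul (ne_of_gt hn') (ne_of_gt h0)]
      rw [hlog] at this
      have h1 : 1/(n * c i) - 1 = (1/n)/(c i) - 1 := by ring
      -- multiply by c i > 0
      have := mul_le_mul_of_nonneg_left this (le_of_lt h0)
      calc Real.negMulLog (c i) = c i * (-(Real.log n + Real.log (c i))) + c i * Real.log n := by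
            rw [Real.negMulLog]; ring
        _ ≤ c i * (1/(n * c i) - 1) + c i * Real.log n := by linarith
        _ = c i * Real.log n + (1/n - c i) := by field_simp; ring
  calc ∑ i ∈ s, Real.negMulLog (c i) ≤ ∑ i ∈ s, (c i * Real.log n + (1/n - c i)) :=
        Finset.sum_le_sum key
    _ = Real.log n + (s.card * (1/n) - 1) := by
        rw [Finset.sum_add_distrib, ← Finset.sum_mul, hsum, Finset.sum_sub_distrib, hsum]
        rw [Finset.sum_const, nsmul_eq_mul]; ring
    _ ≤ Real.log n := by
        have : (s.card : ℝ) * (1/n) ≤ 1 := by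
          rw [mul_one_div, div_le_one hn']
          exact_mod_cast hcard
        linarith

lemma classical_one_sided {d : ℕ} (hd : 2 ≤ d) (p q : Fin d → ℝ)
    (hp : ∀ i, 0 ≤ p i) (hq : ∀ i, 0 ≤ q i)
    (hps : ∑ i, p i = 1) (hqs : ∑ i, q i = 1) :
    ∑ i, Real.negMulLog (p i) - ∑ i, Real.negMulLog (q i) ≤
      Real.qaryEntropy d ((∑ i, |p i - q i|) / 2) := by
  classical
  set a : Fin d → ℝ := fun i => max (p i - q i) 0 with ha_def
  set b : Fin d → ℝ := fun i => max (q i - p i) 0 with hb_def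
  set m : Fin d → ℝ := fun i => min (p i) (q i) with hm_def
  have ha0 : ∀ i, 0 ≤ a i := fun i => le_max_right _ _
  have hb0 : ∀ i, 0 ≤ b i := fun i => le_max_right _ _
  have hm0 : ∀ i, 0 ≤ m i := fun i => le_min (hp i) (hq i)
  have hpm : ∀ i, p i = m i + a i := by
    intro i; rcases le_total (p i) (q i) with h | h
    · simp [ha_def, hm_def, min_eq_left h, max_eq_right (sub_nonpos.mpr h)]
    · simp [ha_def, hm_def, min_eq_right h, max_eq_left (sub_nonneg.mpr h)]
  have hqm : ∀ i, q i = m i + b i := by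
    intro i; rcases le_total (p i) (q i) with h | h
    · simp [hb_def, hm_def, min_eq_left h, max_eq_left (sub_nonneg.mpr h)]
    · simp [hb_def, hm_def, min_eq_right h, max_eq_right (sub_nonpos.mpr h)]
  have hab : ∀ i, a i = 0 ∨ b i = 0 := by
    intro i; rcases le_total (p i) (q i) with h | h
    · left; simp [ha_def, max_eq_right (sub_nonpos.mpr h)]
    · right; simp [hb_def, max_eq_right (sub_nonpos.mpr h)]
  have habs : ∀ i, |p i - q i| = a i + b i := by
    intro i; rcases le_total (p i) (q i) with h | h
    · rw [abs_of_nonpos (sub_nonpos.mpr h)]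
      simp [ha_def, hb_def, max_eq_right (sub_nonpos.mpr h), max_eq_left (sub_nonneg.mpr h)]
    · rw [abs_of_nonneg (sub_nonneg.mpr h)]
      simp [ha_def, hb_def, max_eq_left (sub_nonneg.mpr h), max_eq_right (sub_nonpos.mpr h)]
  set v : ℝ := ∑ i, a i with hv_def
  have hv0 : 0 ≤ v := Finset.sum_nonneg fun i _ => ha0 i
  have hvb : ∑ i, b i = v := by
    have h1 : ∑ i, (a i - b i) = 0 := by
      have : ∀ i, a i - b i = p i - q i := by
        intro i; rw [hpm i, hqm i]; ring
      simp only [this, Finset.sum_sub_distrib, hps, hqs, sub_self]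
    rw [Finset.sum_sub_distrib] at h1
    linarith
  have hv2 : (∑ i, |p i - q i|) / 2 = v := by
    simp only [habs, Finset.sum_add_distrib, hvb, ← hv_def]
    ring
  rw [hv2]
  rcases eq_or_lt_of_le hv0 with hv | hv
  · -- v = 0 : p = q
    have haz : ∀ i ∈ Finset.univ, a i = 0 := by
      intro i _
      exact le_antisymm (by
        have := Finset.single_le_sum (fun j (_ : j ∈ Finset.univ) => ha0 j) (Finset.mem_univ i)
        rw [← hv_def] at this; linarith) (ha0 i)
    have hbz : ∀ i ∈ Finset.univ, b i = 0 := by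
      intro i _
      exact le_antisymm (by
        have := Finset.single_le_sum (fun j (_ : j ∈ Finset.univ) => hb0 j) (Finset.mem_univ i)
        rw [hvb] at this; linarith) (hb0 i)
    have hpq : p = q := by
      funext i; rw [hpm i, hqm i, haz i (Finset.mem_univ i), hbz i (Finset.mem_univ i)]
    rw [hpq, ← hv, sub_self]
    simp [Real.qaryEntropy]
  · -- v > 0
    set J : Fin d → Fin d → ℝ := fun i j => if i = j then m i else a i * b j / v with hJ_def
    have hJ0 : ∀ i j, 0 ≤ J i j := by
      intro i j; by_cases h : i = j <;> simp [hJ_def, h]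
      · exact hm0 j
      · positivity
    have hrow : ∀ i, ∑ j, J i j = p i := by
      intro i
      rw [← Finset.add_sum_erase _ _ (Finset.mem_univ i)]
      have h1 : ∑ j ∈ Finset.univ.erase i, J i j = a i * (v - b i) / v := by
        have e : ∀ j ∈ Finset.univ.erase i, J i j = a i / v * b j := by
          intro j hj
          have hij : i ≠ j := fun h => (Finset.mem_erase.mp hj).1 h.symm
          have : J i j = a i * b j / v := by simp [hJ_def, hij]
          rw [this]; ring
        rw [Finset.sum_congr rfl e, ← Finset.mul_sum,
          Finset.sum_erase_eq_sub (Finset.mem_univ i), hvb]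
        ring
      rw [h1]
      simp only [hJ_def, if_pos rfl]
      rcases hab i with h | h
      · rw [h, hpm i, h]; ring
      · rw [h, hpm i]; field_simp; ring
    have hcol : ∀ j, ∑ i, J i j = q j := by
      intro j
      rw [← Finset.add_sum_erase _ _ (Finset.mem_univ j)]
      have h1 : ∑ i ∈ Finset.univ.erase j, J i j = (v - a j) * b j / v := by
        have e : ∀ i ∈ Finset.univ.erase j, J i j = b j / v * a i := by
          intro i hi
          have hij : i ≠ j := (Finset.mem_erase.mp hi).1
          have : J i j = a i * b j / v := by simp [hJ_def, hij]
          rw [this]; ring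
        rw [Finset.sum_congr rfl e, ← Finset.mul_sum,
          Finset.sum_erase_eq_sub (Finset.mem_univ j), ← hv_def]
        ring
      rw [h1]
      simp only [hJ_def, if_pos rfl]
      rcases hab j with h | h
      · rw [h, hqm j]; field_simp; ring
      · rw [h, hqm j, h]; ring
    set Ha : ℝ := ∑ i, Real.negMulLog (a i / v) with hHa_def
    -- Step 1
    have step1 : ∑ i, Real.negMulLog (p i) ≤ ∑ i, ∑ j, Real.negMulLog (J i j) := by
      apply Finset.sum_le_sum
      intro i _
      rw [← hrow i]
      exact negMulLog_sum_le _ _ (fun j _ => hJ0 i j)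
    -- Step 2 : column identity
    have step2 : ∀ j, ∑ i, Real.negMulLog (J i j) =
        Real.negMulLog (m j) + Real.negMulLog (b j) + b j * Ha := by
      intro j
      rw [← Finset.add_sum_erase _ _ (Finset.mem_univ j)]
      simp only [hJ_def, if_pos rfl]
      rcases eq_or_lt_of_le (hb0 j) with hbj | hbj
      · have : ∀ i ∈ Finset.univ.erase j, Real.negMulLog (if i = j then m i else a i * b j / v) = 0 := by
          intro i hi
          have hij : i ≠ j := (Finset.mem_erase.mp hi).1
          simp [hij, ← hbj]
        rw [Finset.sum_congr rfl this]
        simp [← hbj]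
      · have haj : a j = 0 := by
          rcases hab j with h | h
          · exact h
          · exfalso; rw [h] at hbj; exact lt_irrefl 0 hbj
        have hterm : ∀ i ∈ Finset.univ.erase j,
            Real.negMulLog (if i = j then m i else a i * b j / v) =
              b j * Real.negMulLog (a i / v) + (a i / v) * Real.negMulLog (b j) := by
          intro i hi
          have hij : i ≠ j := (Finset.mem_erase.mp hi).1
          rw [if_neg hij]
          have : a i * b j / v = (a i / v) * b j := by ring
          rw [this, Real.negMulLog_mul]
        rw [Finset.sum_congr rfl hterm, Finset.sum_add_distrib, ← Finset.mul_sum, ← Finset.sum_mul]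
        have e1 : ∑ i ∈ Finset.univ.erase j, Real.negMulLog (a i / v) = Ha := by
          rw [hHa_def, ← Finset.add_sum_erase _ _ (Finset.mem_univ j), haj]
          simp
        have e2 : ∑ i ∈ Finset.univ.erase j, a i / v = 1 := by
          rw [← Finset.sum_div, Finset.sum_erase_eq_sub (Finset.mem_univ j), haj, ← hv_def]
          field_simp; ring
        rw [e1, e2, one_mul]
        ring
    -- Step 3
    have step3 : ∑ j, (Real.negMulLog (m j) + Real.negMulLog (b j)) ≤
        ∑ j, Real.negMulLog (q j) + Real.binEntropy v := by
      set β : Fin d → ℝ := fun j => if q j = 0 then 0 else b j / q j with hβ_def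
      have hbq : ∀ j, b j ≤ q j := by
        intro j
        rcases le_total (p j) (q j) with h | h
        · simp only [hb_def]
          rw [max_eq_left (sub_nonneg.mpr h)]
          linarith [hp j]
        · simp only [hb_def]
          rw [max_eq_right (sub_nonpos.mpr h)]
          exact hq j
      have hqβ : ∀ j, q j * β j = b j := by
        intro j
        by_cases h : q j = 0
        · have hb' : b j = 0 := le_antisymm (by rw [← h]; exact hbq j) (hb0 j)
          simp [hβ_def, h, hb']
        · simp only [hβ_def, if_neg h]
          field_simp
      have hid : ∀ j, Real.negMulLog (m j) + Real.negMulLog (b j) =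
          Real.negMulLog (q j) + q j * Real.binEntropy (β j) := by
        intro j
        by_cases h : q j = 0
        · have hb' : b j = 0 := le_antisymm (h ▸ hbq j) (hb0 j)
          have hm' : m j = 0 := by
            have := hqm j; rw [h, hb'] at this; linarith
          simp [h, hb', hm']
        · have hβ' : β j = b j / q j := by simp [hβ_def, h]
          have hq' : (0:ℝ) < q j := lt_of_le_of_ne (hq j) (Ne.symm h)
          have hm' : m j = q j * (1 - β j) := by
            rw [hβ']; field_simp; linarith [hqm j]
          have hb' : b j = q j * β j := (hqβ j).symm
          rw [hm', hb', Real.negMulLog_mul, Real.negMulLog_mul,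
            Real.binEntropy_eq_negMulLog_add_negMulLog_one_sub]
          ring
      rw [Finset.sum_congr rfl (fun j _ => hid j), Finset.sum_add_distrib]
      have hjensen : ∑ j, q j * Real.binEntropy (β j) ≤ Real.binEntropy v := by
        have hconc : ConcaveOn ℝ (Set.Icc (0:ℝ) 1) Real.binEntropy :=
          Real.strictConcave_binEntropy.concaveOn
        have hβmem : ∀ j ∈ Finset.univ, β j ∈ Set.Icc (0:ℝ) 1 := by
          intro j _
          by_cases h : q j = 0
          · simp [hβ_def, h]
          · have hq' : (0:ℝ) < q j := lt_of_le_of_ne (hq j) (Ne.symm h)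
            constructor
            · simp only [hβ_def, if_neg h]; positivity
            · simp only [hβ_def, if_neg h]
              rw [div_le_one hq']; exact hbq j
        have := hconc.le_map_sum (t := Finset.univ) (w := q) (p := β)
          (fun j _ => hq j) hqs hβmem
        simp only [smul_eq_mul] at this
        have hsum : ∑ j, q j * β j = v := by
          rw [Finset.sum_congr rfl (fun j _ => hqβ j), hvb]
        rw [hsum] at this
        exact this
      linarith
    -- Step 4
    have step4 : Ha ≤ Real.log ((d:ℝ) - 1) := by
      obtain ⟨j0, hj0⟩ : ∃ j0, 0 < b j0 := by
        by_contra hcon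
        push_neg at hcon
        have : ∑ i, b i ≤ 0 := Finset.sum_nonpos fun i _ => hcon i
        rw [hvb] at this; linarith
      have haj0 : a j0 = 0 := by
        rcases hab j0 with h | h
        · exact h
        · exfalso; rw [h] at hj0; exact lt_irrefl 0 hj0
      have hHa' : Ha = ∑ i ∈ Finset.univ.erase j0, Real.negMulLog (a i / v) := by
        rw [hHa_def, ← Finset.add_sum_erase _ _ (Finset.mem_univ j0), haj0]
        simp
      have hcast : ((d - 1 : ℕ) : ℝ) = (d:ℝ) - 1 := by
        have : 1 ≤ d := le_trans (by norm_num) hd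
        push_cast [Nat.cast_sub this]
        ring
      rw [hHa', ← hcast]
      apply sum_negMulLog_le_log_card _ _ (d-1) (by omega)
      · rw [Finset.card_erase_of_mem (Finset.mem_univ j0)]
        simp
      · intro i _; positivity
      · rw [← Finset.sum_div, Finset.sum_erase_eq_sub (Finset.mem_univ j0), haj0, ← hv_def]
        field_simp; ring
    -- assemble
    have hcolsum : ∑ i, ∑ j, Real.negMulLog (J i j) =
        ∑ j, (Real.negMulLog (m j) + Real.negMulLog (b j)) + v * Ha := by
      rw [Finset.sum_comm]
      rw [Finset.sum_congr rfl (fun j _ => step2 j), Finset.sum_add_distrib, ← Finset.sum_mul, hvb]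
    have hfinal : v * Ha ≤ v * Real.log ((d:ℝ) - 1) :=
      mul_le_mul_of_nonneg_left step4 hv0
    have hqary : Real.qaryEntropy d v = v * Real.log ((d:ℝ) - 1) + Real.binEntropy v := by
      rw [Real.qaryEntropy]
      norm_num
    rw [hqary]
    calc ∑ i, Real.negMulLog (p i) - ∑ i, Real.negMulLog (q i)
        ≤ (∑ i, ∑ j, Real.negMulLog (J i j)) - ∑ i, Real.negMulLog (q i) := by linarith
      _ = (∑ j, (Real.negMulLog (m j) + Real.negMulLog (b j)) + v * Ha) -
            ∑ i, Real.negMulLog (q i) := by rw [hcolsum]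
      _ ≤ v * Real.log ((d:ℝ) - 1) + Real.binEntropy v := by linarith

lemma classical_fannes {d : ℕ} (hd : 2 ≤ d) (p q : Fin d → ℝ)
    (hp : ∀ i, 0 ≤ p i) (hq : ∀ i, 0 ≤ q i)
    (hps : ∑ i, p i = 1) (hqs : ∑ i, q i = 1) :
    |∑ i, Real.negMulLog (p i) - ∑ i, Real.negMulLog (q i)| ≤
      Real.qaryEntropy d ((∑ i, |p i - q i|) / 2) := by
  rw [abs_sub_le_iff]
  constructor
  · exact classical_one_sided hd p q hp hq hps hqs
  · have := classical_one_sided hd q p hq hp hqs hps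
    have hsym : (∑ i, |q i - p i|) = ∑ i, |p i - q i| := by
      apply Finset.sum_congr rfl
      intro i _; exact abs_sub_comm _ _
    rwa [hsym] at this

open Finset Matrix ComplexOrder

variable {d : ℕ}

/-- real quadratic form of a matrix -/
noncomputable def qf (M : Matrix (Fin d) (Fin d) ℂ) (x : Fin d → ℂ) : ℝ :=
  (dotProduct (star x) (M *ᵥ x)).re

lemma dotProduct_star_self (x : Fin d → ℂ) :
    dotProduct (star x) x = ((∑ i, Complex.normSq (x i) : ℝ) : ℂ) := by
  simp only [dotProduct, Pi.star_apply, Complex.ofReal_sum, Complex.star_def]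
  congr 1
  ext i
  rw [← Complex.normSq_eq_conj_mul_self]

/-- coordinates w.r.t. the eigenbasis -/
noncomputable def coords {M : Matrix (Fin d) (Fin d) ℂ} (hM : M.IsHermitian)
    (x : Fin d → ℂ) : Fin d → ℂ :=
  (star (hM.eigenvectorUnitary : Matrix (Fin d) (Fin d) ℂ)) *ᵥ x

lemma star_coords {M : Matrix (Fin d) (Fin d) ℂ} (hM : M.IsHermitian) (x : Fin d → ℂ) :
    star (coords hM x) = (star x) ᵥ* (hM.eigenvectorUnitary : Matrix (Fin d) (Fin d) ℂ) := by
  rw [coords, Matrix.star_mulVec, Matrix.star_eq_conjTranspose, Matrix.conjTranspose_conjTranspose]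

/-- Parseval -/
lemma sum_normSq_coords {M : Matrix (Fin d) (Fin d) ℂ} (hM : M.IsHermitian) (x : Fin d → ℂ) :
    ∑ k, Complex.normSq (coords hM x k) = ∑ i, Complex.normSq (x i) := by
  have h1 : dotProduct (star (coords hM x)) (coords hM x)
      = dotProduct (star x) x := by
    rw [star_coords, coords, ← Matrix.dotProduct_mulVec, Matrix.mulVec_mulVec,
      (Matrix.mem_unitaryGroup_iff).mp hM.eigenvectorUnitary.2, Matrix.one_mulVec]
  have := dotProduct_star_self (coords hM x)
  rw [h1, dotProduct_star_self x] at this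
  exact_mod_cast (congrArg Complex.re this).symm

/-- expansion of the quadratic form in eigencoordinates -/
lemma qf_expand {M : Matrix (Fin d) (Fin d) ℂ} (hM : M.IsHermitian) (x : Fin d → ℂ) :
    qf M x = ∑ k, hM.eigenvalues k * Complex.normSq (coords hM x k) := by
  set U := (hM.eigenvectorUnitary : Matrix (Fin d) (Fin d) ℂ) with hU
  have hspec := hM.spectral_theorem
  have key : dotProduct (star x) (M *ᵥ x)
      = ∑ k, (hM.eigenvalues k : ℂ) * Complex.normSq (coords hM x k) := by
    conv_lhs => rw [hspec, Unitary.conjStarAlgAut_apply]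
    rw [← Matrix.mulVec_mulVec, ← Matrix.mulVec_mulVec, Matrix.dotProduct_mulVec,
      ← star_coords hM x]
    have : (Matrix.diagonal (RCLike.ofReal ∘ hM.eigenvalues)) *ᵥ (coords hM x)
        = fun k => (hM.eigenvalues k : ℂ) * coords hM x k := by
      funext k
      rw [Matrix.mulVec_diagonal]
      rfl
    rw [show (star (hM.eigenvectorUnitary : Matrix (Fin d) (Fin d) ℂ)) *ᵥ x = coords hM x
      from rfl, this]
    simp only [dotProduct, Pi.star_apply]
    congr 1
    ext k
    have : star (coords hM x k) * ((hM.eigenvalues k : ℂ) * coords hM x k)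
        = (hM.eigenvalues k : ℂ) * (star (coords hM x k) * coords hM x k) := by ring
    rw [this, Complex.star_def, ← Complex.normSq_eq_conj_mul_self]
  rw [qf, key]
  simp

/-- star U * U = 1 -/
lemma ustar_mul {M : Matrix (Fin d) (Fin d) ℂ} (hM : M.IsHermitian) :
    star (hM.eigenvectorUnitary : Matrix (Fin d) (Fin d) ℂ) *
      (hM.eigenvectorUnitary : Matrix (Fin d) (Fin d) ℂ) = 1 :=
  (Matrix.mem_unitaryGroup_iff').mp hM.eigenvectorUnitary.2

/-- trace of a Hermitian matrix equals the sum of its eigenvalues -/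
lemma re_trace_eq_sum_eigenvalues {M : Matrix (Fin d) (Fin d) ℂ} (hM : M.IsHermitian) :
    (Matrix.trace M).re = ∑ k, hM.eigenvalues k := by
  have h1 : Matrix.trace M = ∑ k, (hM.eigenvalues k : ℂ) := by
    conv_lhs => rw [hM.spectral_theorem, Unitary.conjStarAlgAut_apply]
    rw [Matrix.trace_mul_cycle, ustar_mul hM, Matrix.one_mul, Matrix.trace_diagonal]
    rfl
  rw [h1]
  simp

/-- Hermitian conjugation of a real diagonal by the eigenvector unitary -/
noncomputable def diagConj {M : Matrix (Fin d) (Fin d) ℂ} (hM : M.IsHermitian)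
    (f : Fin d → ℝ) : Matrix (Fin d) (Fin d) ℂ :=
  (hM.eigenvectorUnitary : Matrix (Fin d) (Fin d) ℂ) * Matrix.diagonal (RCLike.ofReal ∘ f) *
    star (hM.eigenvectorUnitary : Matrix (Fin d) (Fin d) ℂ)

lemma diagConj_posSemidef {M : Matrix (Fin d) (Fin d) ℂ} (hM : M.IsHermitian)
    {f : Fin d → ℝ} (hf : ∀ i, 0 ≤ f i) : (diagConj hM f).PosSemidef := by
  have hdiag : (Matrix.diagonal (RCLike.ofReal ∘ f) : Matrix (Fin d) (Fin d) ℂ).PosSemidef := by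
    rw [Matrix.posSemidef_diagonal_iff]
    intro i
    simpa using hf i
  have := hdiag.mul_mul_conjTranspose_same (hM.eigenvectorUnitary : Matrix (Fin d) (Fin d) ℂ)
  rwa [← Matrix.star_eq_conjTranspose] at this

lemma diagonal_ofReal_sub (f g : Fin d → ℝ) :
    (Matrix.diagonal (RCLike.ofReal ∘ f) : Matrix (Fin d) (Fin d) ℂ) -
      Matrix.diagonal (RCLike.ofReal ∘ g) = Matrix.diagonal (RCLike.ofReal ∘ (f - g)) := by
  rw [Matrix.diagonal_sub]
  congr 1
  funext i
  simp

lemma diagConj_sub {M : Matrix (Fin d) (Fin d) ℂ} (hM : M.IsHermitian) (f g : Fin d → ℝ) :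
    diagConj hM f - diagConj hM g = diagConj hM (f - g) := by
  rw [diagConj, diagConj, diagConj, ← Matrix.sub_mul, ← Matrix.mul_sub, diagonal_ofReal_sub]

lemma diagConj_trace {M : Matrix (Fin d) (Fin d) ℂ} (hM : M.IsHermitian) (f : Fin d → ℝ) :
    (Matrix.trace (diagConj hM f)).re = ∑ k, f k := by
  rw [diagConj, Matrix.trace_mul_cycle, ustar_mul hM, Matrix.one_mul, Matrix.trace_diagonal]
  simp

lemma diagConj_eigenvalues_self {M : Matrix (Fin d) (Fin d) ℂ} (hM : M.IsHermitian) :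
    diagConj hM hM.eigenvalues = M := (hM.spectral_theorem).symm

lemma diagConj_mul {M : Matrix (Fin d) (Fin d) ℂ} (hM : M.IsHermitian) (f g : Fin d → ℝ) :
    diagConj hM f * diagConj hM g = diagConj hM (fun k => f k * g k) := by
  rw [diagConj, diagConj, diagConj]
  simp only [Matrix.mul_assoc]
  have h1 : star (hM.eigenvectorUnitary : Matrix (Fin d) (Fin d) ℂ) *
      ((hM.eigenvectorUnitary : Matrix (Fin d) (Fin d) ℂ) *
        (Matrix.diagonal (RCLike.ofReal ∘ g) *
          star (hM.eigenvectorUnitary : Matrix (Fin d) (Fin d) ℂ))) =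
      Matrix.diagonal (RCLike.ofReal ∘ g) *
        star (hM.eigenvectorUnitary : Matrix (Fin d) (Fin d) ℂ) := by
    rw [← Matrix.mul_assoc, ustar_mul hM, Matrix.one_mul]
  rw [h1, ← Matrix.mul_assoc (Matrix.diagonal (RCLike.ofReal ∘ f)),
    Matrix.diagonal_mul_diagonal]
  congr 2
  funext i j
  by_cases h : i = j <;> simp [Matrix.diagonal_apply, h]

lemma diagConj_sq {M : Matrix (Fin d) (Fin d) ℂ} (hM : M.IsHermitian) (f : Fin d → ℝ) :
    (diagConj hM f) ^ 2 = diagConj hM (fun k => f k ^ 2) := by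
  rw [pow_two, diagConj_mul,
    show (fun k => f k * f k) = fun k => f k ^ 2 from funext fun k => (pow_two (f k)).symm]

/-- trace norm of a Hermitian matrix equals sum of absolute values of eigenvalues -/
lemma traceNorm_hermitian {d : ℕ} {A : Matrix (Fin d) (Fin d) ℂ} (hA : A.IsHermitian) :
    traceNorm A = ∑ k, |hA.eigenvalues k| := by
  set N := diagConj hA (fun k => |hA.eigenvalues k|) with hN_def
  have hNpsd : N.PosSemidef := diagConj_posSemidef hA (fun i => abs_nonneg _)
  have hNsq : N ^ 2 = Aᴴ * A := by
    rw [hN_def, diagConj_sq]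
    have h1 : (fun k => |hA.eigenvalues k| ^ 2) = fun k => hA.eigenvalues k ^ 2 := by
      funext k; rw [sq_abs]
    rw [h1, ← diagConj_sq, diagConj_eigenvalues_self, hA.eq, ← pow_two]
  set hH := Matrix.posSemidef_conjTranspose_mul_self A with hH_def
  have hS : traceNorm A =
      (Matrix.trace (diagConj hH.1 (Real.sqrt ∘ hH.1.eigenvalues))).re := rfl
  have hSpsd : (diagConj hH.1 (Real.sqrt ∘ hH.1.eigenvalues)).PosSemidef :=
    diagConj_posSemidef hH.1 (fun i => Real.sqrt_nonneg _)
  have hSsq : diagConj hH.1 (Real.sqrt ∘ hH.1.eigenvalues) *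
      diagConj hH.1 (Real.sqrt ∘ hH.1.eigenvalues) = Aᴴ * A := by
    rw [diagConj_mul]
    conv_rhs => rw [← diagConj_eigenvalues_self hH.1]
    congr 1
    funext k
    exact Real.mul_self_sqrt (hH.eigenvalues_nonneg k)
  have hEq : N = diagConj hH.1 (Real.sqrt ∘ hH.1.eigenvalues) := by
    open scoped MatrixOrder in
    exact (CFC.mul_self_eq_mul_self_iff N _ hNpsd.nonneg hSpsd.nonneg).mp
      (by rw [← pow_two, hNsq, hSsq])
  rw [hS, ← hEq, hN_def, diagConj_trace]

/-- Linear programming bound: sum of weights times [0,1]-coefficients summing to r is at most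
the sum of the r largest weights. -/
lemma lp_upper {d r : ℕ} (hr : r ≤ d) (w c : Fin d → ℝ) (hw : Monotone w)
    (h0 : ∀ i, 0 ≤ c i) (h1 : ∀ i, c i ≤ 1) (hsum : ∑ i, c i = r) :
    ∑ i, w i * c i ≤ ∑ i ∈ Finset.univ.filter (fun i : Fin d => d - r ≤ (i : ℕ)), w i := by
  rcases Nat.eq_zero_or_pos r with hr0 | hr0
  · subst hr0
    have hc : ∀ i ∈ Finset.univ, c i = 0 := by
      intro i _
      have hle := Finset.single_le_sum (fun j (_ : j ∈ Finset.univ) => h0 j) (Finset.mem_univ i)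
      rw [hsum] at hle
      exact le_antisymm (by exact_mod_cast hle) (h0 i)
    have hfilter : Finset.univ.filter (fun i : Fin d => d - 0 ≤ (i : ℕ)) = ∅ := by
      ext i
      simp only [Finset.mem_filter, Finset.mem_univ, true_and, Finset.notMem_empty, iff_false]
      have := i.isLt
      omega
    rw [hfilter, Finset.sum_empty]
    rw [Finset.sum_congr rfl (fun i hi => by rw [hc i hi, mul_zero])]
    simp
  · have hdr : d - r < d := by omega
    set θ := w ⟨d - r, hdr⟩ with hθ
    have key : ∀ i, w i * c i ≤ θ * c i + max (w i - θ) 0 := by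
      intro i
      rcases le_or_gt θ (w i) with h | h
      · have : (w i - θ) * c i ≤ (w i - θ) * 1 :=
          mul_le_mul_of_nonneg_left (h1 i) (by linarith)
        have hm : max (w i - θ) 0 = w i - θ := max_eq_left (by linarith)
        nlinarith
      · have : w i * c i ≤ θ * c i := mul_le_mul_of_nonneg_right h.le (h0 i)
        have hm : (0:ℝ) ≤ max (w i - θ) 0 := le_max_right _ _
        linarith
    have hfilt : Finset.univ.filter (fun i : Fin d => d - r ≤ (i : ℕ)) =
        Finset.Ici (⟨d - r, hdr⟩ : Fin d) := by
      ext i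
      simp [Fin.le_def]
    have hcard : (Finset.univ.filter (fun i : Fin d => d - r ≤ (i : ℕ))).card = r := by
      rw [hfilt, Fin.card_Ici]
      simp only [Fin.val_mk]
      omega
    have hmax : ∑ i, max (w i - θ) 0 =
        ∑ i ∈ Finset.univ.filter (fun i : Fin d => d - r ≤ (i : ℕ)), (w i - θ) := by
      rw [Finset.sum_filter]
      apply Finset.sum_congr rfl
      intro i _
      by_cases h : d - r ≤ (i : ℕ)
      · rw [if_pos h, max_eq_left]
        have : (⟨d - r, hdr⟩ : Fin d) ≤ i := by
          rw [Fin.le_def]; exact h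
        linarith [hw this]
      · rw [if_neg h, max_eq_right]
        have : i ≤ (⟨d - r, hdr⟩ : Fin d) := by
          rw [Fin.le_def]
          simp only [not_le] at h
          simp only [Fin.val_mk]
          omega
        linarith [hw this]
    calc ∑ i, w i * c i ≤ ∑ i, (θ * c i + max (w i - θ) 0) := Finset.sum_le_sum fun i _ => key i
      _ = θ * r + ∑ i ∈ Finset.univ.filter (fun i : Fin d => d - r ≤ (i : ℕ)), (w i - θ) := by
          rw [Finset.sum_add_distrib, ← Finset.mul_sum, hsum, hmax]
      _ = ∑ i ∈ Finset.univ.filter (fun i : Fin d => d - r ≤ (i : ℕ)), w i := by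
          rw [Finset.sum_sub_distrib, Finset.sum_const, hcard, nsmul_eq_mul]
          ring

/-- The r smallest weights lower bound. -/
lemma lp_lower {d r : ℕ} (hr : r ≤ d) (w c : Fin d → ℝ) (hw : Monotone w)
    (h0 : ∀ i, 0 ≤ c i) (h1 : ∀ i, c i ≤ 1) (hsum : ∑ i, c i = r) :
    ∑ i ∈ Finset.univ.filter (fun i : Fin d => (i : ℕ) < r), w i ≤ ∑ i, w i * c i := by
  rcases Nat.eq_zero_or_pos r with hr0 | hr0
  · subst hr0
    have hc : ∀ i ∈ Finset.univ, c i = 0 := by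
      intro i _
      have hle := Finset.single_le_sum (fun j (_ : j ∈ Finset.univ) => h0 j) (Finset.mem_univ i)
      rw [hsum] at hle
      exact le_antisymm (by exact_mod_cast hle) (h0 i)
    have hfilter : Finset.univ.filter (fun i : Fin d => (i : ℕ) < 0) = ∅ := by
      ext i; simp
    rw [hfilter, Finset.sum_empty]
    rw [Finset.sum_congr rfl (fun i hi => by rw [hc i hi, mul_zero])]
    simp
  · have hr1 : r - 1 < d := by omega
    set θ := w ⟨r - 1, hr1⟩ with hθ
    have key : ∀ i, θ * c i + min (w i - θ) 0 ≤ w i * c i := by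
      intro i
      rcases le_or_gt θ (w i) with h | h
      · have : θ * c i ≤ w i * c i := mul_le_mul_of_nonneg_right h (h0 i)
        have hm : min (w i - θ) 0 ≤ 0 := min_le_right _ _
        linarith
      · have hmin : min (w i - θ) 0 = w i - θ := min_eq_left (by linarith)
        have : (w i - θ) * 1 ≤ (w i - θ) * c i := by
          apply mul_le_mul_of_nonpos_left (h1 i) (by linarith)
        nlinarith
    have hfilt : Finset.univ.filter (fun i : Fin d => (i : ℕ) < r) =
        Finset.Iic (⟨r - 1, hr1⟩ : Fin d) := by
      ext i
      simp [Fin.le_def]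
      omega
    have hcard : (Finset.univ.filter (fun i : Fin d => (i : ℕ) < r)).card = r := by
      rw [hfilt, Fin.card_Iic]
      simp
      omega
    have hmin : ∑ i, min (w i - θ) 0 =
        ∑ i ∈ Finset.univ.filter (fun i : Fin d => (i : ℕ) < r), (w i - θ) := by
      rw [Finset.sum_filter]
      apply Finset.sum_congr rfl
      intro i _
      by_cases h : (i : ℕ) < r
      · rw [if_pos h, min_eq_left]
        have : i ≤ (⟨r - 1, hr1⟩ : Fin d) := by
          rw [Fin.le_def]; simp; omega
        linarith [hw this]
      · rw [if_neg h, min_eq_right]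
        have : (⟨r - 1, hr1⟩ : Fin d) ≤ i := by
          rw [Fin.le_def]; simp; omega
        linarith [hw this]
    calc ∑ i ∈ Finset.univ.filter (fun i : Fin d => (i : ℕ) < r), w i
        = θ * r + ∑ i ∈ Finset.univ.filter (fun i : Fin d => (i : ℕ) < r), (w i - θ) := by
          rw [Finset.sum_sub_distrib, Finset.sum_const, hcard, nsmul_eq_mul]
          ring
      _ = ∑ i, (θ * c i + min (w i - θ) 0) := by
          rw [Finset.sum_add_distrib, ← Finset.mul_sum, hsum, hmin]
      _ ≤ ∑ i, w i * c i := Finset.sum_le_sum fun i _ => key i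

/-- the j-th column of a matrix -/
def mcol {d : ℕ} (U : Matrix (Fin d) (Fin d) ℂ) (j : Fin d) : Fin d → ℂ := fun i => U i j

/-- sorted (ascending) eigenvalues -/
noncomputable def sortedEig {d : ℕ} {M : Matrix (Fin d) (Fin d) ℂ} (hM : M.IsHermitian) :
    Fin d → ℝ :=
  hM.eigenvalues ∘ Tuple.sort hM.eigenvalues

lemma sortedEig_monotone {d : ℕ} {M : Matrix (Fin d) (Fin d) ℂ} (hM : M.IsHermitian) :
    Monotone (sortedEig hM) := Tuple.monotone_sort hM.eigenvalues

lemma sortedEig_sum {d : ℕ} {M : Matrix (Fin d) (Fin d) ℂ} (hM : M.IsHermitian) :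
    ∑ i, sortedEig hM i = ∑ k, hM.eigenvalues k :=
  Equiv.sum_comp (Tuple.sort hM.eigenvalues) hM.eigenvalues

section KyFan

variable {d : ℕ} {M C : Matrix (Fin d) (Fin d) ℂ}

/-- transition matrix between two eigenbases -/
noncomputable def transMat (hM : M.IsHermitian) (hC : C.IsHermitian) :
    Matrix (Fin d) (Fin d) ℂ :=
  star (hM.eigenvectorUnitary : Matrix (Fin d) (Fin d) ℂ) *
    (hC.eigenvectorUnitary : Matrix (Fin d) (Fin d) ℂ)

lemma transMat_unitary (hM : M.IsHermitian) (hC : C.IsHermitian) :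
    transMat hM hC ∈ Matrix.unitaryGroup (Fin d) ℂ :=
  mul_mem (Unitary.star_mem hM.eigenvectorUnitary.2) hC.eigenvectorUnitary.2

lemma transMat_row_sum (hM : M.IsHermitian) (hC : C.IsHermitian) (k : Fin d) :
    ∑ j, Complex.normSq (transMat hM hC k j) = 1 := by
  have h1 : (transMat hM hC * star (transMat hM hC)) k k = 1 := by
    rw [(Matrix.mem_unitaryGroup_iff).mp (transMat_unitary hM hC)]
    simp
  rw [Matrix.mul_apply] at h1
  have h2 : ∀ j, transMat hM hC k j * star (transMat hM hC) j k
      = (Complex.normSq (transMat hM hC k j) : ℂ) := by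
    intro j
    rw [Matrix.star_apply, Complex.star_def, Complex.mul_conj]
  rw [Finset.sum_congr rfl (fun j _ => h2 j)] at h1
  exact_mod_cast congrArg Complex.re h1

lemma transMat_col_sum (hM : M.IsHermitian) (hC : C.IsHermitian) (j : Fin d) :
    ∑ k, Complex.normSq (transMat hM hC k j) = 1 := by
  have h1 : (star (transMat hM hC) * transMat hM hC) j j = 1 := by
    rw [(Matrix.mem_unitaryGroup_iff').mp (transMat_unitary hM hC)]
    simp
  rw [Matrix.mul_apply] at h1
  have h2 : ∀ k, star (transMat hM hC) j k * transMat hM hC k j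
      = (Complex.normSq (transMat hM hC k j) : ℂ) := by
    intro k
    rw [Matrix.star_apply, Complex.star_def, mul_comm, Complex.mul_conj]
  rw [Finset.sum_congr rfl (fun k _ => h2 k)] at h1
  exact_mod_cast congrArg Complex.re h1

lemma coords_col (hM : M.IsHermitian) (hC : C.IsHermitian) (j k : Fin d) :
    coords hM (mcol (hC.eigenvectorUnitary : Matrix (Fin d) (Fin d) ℂ) j) k
      = transMat hM hC k j := by
  rw [coords, Matrix.mulVec, transMat, Matrix.mul_apply]
  rfl

lemma qf_col_eigenvalue (hC : C.IsHermitian) (j : Fin d) :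
    qf C (mcol (hC.eigenvectorUnitary : Matrix (Fin d) (Fin d) ℂ) j) = hC.eigenvalues j := by
  have := hC.eigenvalues_eq j
  rw [qf]
  exact this.symm

/-- Ky Fan-type upper bound -/
lemma kyfan_upper (hM : M.IsHermitian) (hC : C.IsHermitian) (J : Finset (Fin d)) :
    ∑ j ∈ J, qf M (mcol (hC.eigenvectorUnitary : Matrix (Fin d) (Fin d) ℂ) j) ≤
      ∑ i ∈ Finset.univ.filter (fun i : Fin d => d - J.card ≤ (i : ℕ)), sortedEig hM i := by
  classical
  set c : Fin d → ℝ := fun k => ∑ j ∈ J, Complex.normSq (transMat hM hC k j) with hc_def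
  have hqf : ∀ j ∈ J, qf M (mcol (hC.eigenvectorUnitary : Matrix (Fin d) (Fin d) ℂ) j)
      = ∑ k, hM.eigenvalues k * Complex.normSq (transMat hM hC k j) := by
    intro j _
    rw [qf_expand hM]
    exact Finset.sum_congr rfl fun k _ => by rw [coords_col hM hC]
  have hswap : ∑ j ∈ J, qf M (mcol (hC.eigenvectorUnitary : Matrix (Fin d) (Fin d) ℂ) j)
      = ∑ k, hM.eigenvalues k * c k := by
    rw [Finset.sum_congr rfl hqf, Finset.sum_comm]
    apply Finset.sum_congr rfl
    intro k _
    rw [hc_def, Finset.mul_sum]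
  have hc0 : ∀ k, 0 ≤ c k := fun k => Finset.sum_nonneg fun j _ => Complex.normSq_nonneg _
  have hc1 : ∀ k, c k ≤ 1 := by
    intro k
    calc c k ≤ ∑ j, Complex.normSq (transMat hM hC k j) :=
          Finset.sum_le_sum_of_subset_of_nonneg (Finset.subset_univ J)
            (fun j _ _ => Complex.normSq_nonneg _)
      _ = 1 := transMat_row_sum hM hC k
  have hcsum : ∑ k, c k = (J.card : ℝ) := by
    rw [hc_def, Finset.sum_comm]
    rw [Finset.sum_congr rfl (fun j _ => transMat_col_sum hM hC j)]
    simp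
  have hcard : J.card ≤ d := by
    have := Finset.card_le_univ J
    simpa using this
  have hlp := lp_upper hcard (sortedEig hM) (c ∘ (Tuple.sort hM.eigenvalues))
    (sortedEig_monotone hM) (fun i => hc0 _) (fun i => hc1 _)
    (by simp only [Function.comp_apply]
        rw [show (∑ i, c ((Tuple.sort hM.eigenvalues) i)) = ∑ k, c k
          from Equiv.sum_comp (Tuple.sort hM.eigenvalues) c, hcsum])
  rw [hswap]
  have heq : ∑ i, sortedEig hM i * (c ∘ (Tuple.sort hM.eigenvalues)) i
      = ∑ k, hM.eigenvalues k * c k :=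
    Equiv.sum_comp (Tuple.sort hM.eigenvalues) (fun k => hM.eigenvalues k * c k)
  rw [← heq]
  exact hlp

/-- Ky Fan-type lower bound -/
lemma kyfan_lower (hM : M.IsHermitian) (hC : C.IsHermitian) (J : Finset (Fin d)) :
    ∑ i ∈ Finset.univ.filter (fun i : Fin d => (i : ℕ) < J.card), sortedEig hM i ≤
      ∑ j ∈ J, qf M (mcol (hC.eigenvectorUnitary : Matrix (Fin d) (Fin d) ℂ) j) := by
  classical
  set c : Fin d → ℝ := fun k => ∑ j ∈ J, Complex.normSq (transMat hM hC k j) with hc_def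
  have hqf : ∀ j ∈ J, qf M (mcol (hC.eigenvectorUnitary : Matrix (Fin d) (Fin d) ℂ) j)
      = ∑ k, hM.eigenvalues k * Complex.normSq (transMat hM hC k j) := by
    intro j _
    rw [qf_expand hM]
    exact Finset.sum_congr rfl fun k _ => by rw [coords_col hM hC]
  have hswap : ∑ j ∈ J, qf M (mcol (hC.eigenvectorUnitary : Matrix (Fin d) (Fin d) ℂ) j)
      = ∑ k, hM.eigenvalues k * c k := by
    rw [Finset.sum_congr rfl hqf, Finset.sum_comm]
    apply Finset.sum_congr rfl
    intro k _
    rw [hc_def, Finset.mul_sum]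
  have hc0 : ∀ k, 0 ≤ c k := fun k => Finset.sum_nonneg fun j _ => Complex.normSq_nonneg _
  have hc1 : ∀ k, c k ≤ 1 := by
    intro k
    calc c k ≤ ∑ j, Complex.normSq (transMat hM hC k j) :=
          Finset.sum_le_sum_of_subset_of_nonneg (Finset.subset_univ J)
            (fun j _ _ => Complex.normSq_nonneg _)
      _ = 1 := transMat_row_sum hM hC k
  have hcsum : ∑ k, c k = (J.card : ℝ) := by
    rw [hc_def, Finset.sum_comm]
    rw [Finset.sum_congr rfl (fun j _ => transMat_col_sum hM hC j)]
    simp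
  have hcard : J.card ≤ d := by
    have := Finset.card_le_univ J
    simpa using this
  have hlp := lp_lower hcard (sortedEig hM) (c ∘ (Tuple.sort hM.eigenvalues))
    (sortedEig_monotone hM) (fun i => hc0 _) (fun i => hc1 _)
    (by simp only [Function.comp_apply]
        rw [show (∑ i, c ((Tuple.sort hM.eigenvalues) i)) = ∑ k, c k
          from Equiv.sum_comp (Tuple.sort hM.eigenvalues) c, hcsum])
  rw [hswap]
  have heq : ∑ i, sortedEig hM i * (c ∘ (Tuple.sort hM.eigenvalues)) i
      = ∑ k, hM.eigenvalues k * c k :=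
    Equiv.sum_comp (Tuple.sort hM.eigenvalues) (fun k => hM.eigenvalues k * c k)
  rw [← heq]
  exact hlp

end KyFan

section Weyl

variable {d : ℕ}

lemma exists_ne_zero_in_kers {n : ℕ} {ι : Type} [Fintype ι] (h : Fintype.card ι < n)
    (φ : ι → ((Fin n → ℂ) →ₗ[ℂ] ℂ)) : ∃ x : Fin n → ℂ, x ≠ 0 ∧ ∀ j, φ j x = 0 := by
  set Φ : (Fin n → ℂ) →ₗ[ℂ] (ι → ℂ) := LinearMap.pi φ with hΦ
  have hker : LinearMap.ker Φ ≠ ⊥ := by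
    intro hbot
    have hrn := LinearMap.finrank_range_add_finrank_ker Φ
    rw [hbot, finrank_bot, add_zero] at hrn
    have hdom : Module.finrank ℂ (Fin n → ℂ) = n := by
      rw [Module.finrank_pi]
      simp
    have hrange : Module.finrank ℂ (LinearMap.range Φ) ≤ Fintype.card ι := by
      have h1 := Submodule.finrank_le (LinearMap.range Φ)
      rwa [Module.finrank_pi] at h1
    omega
  obtain ⟨x, hx, hx0⟩ := (Submodule.ne_bot_iff _).mp hker
  refine ⟨x, hx0, fun j => ?_⟩
  have : Φ x = 0 := hx
  calc φ j x = Φ x j := rfl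
    _ = 0 := by rw [this]; rfl

/-- the k-th eigencoordinate as a linear functional -/
noncomputable def coordFun {M : Matrix (Fin d) (Fin d) ℂ} (hM : M.IsHermitian) (k : Fin d) :
    (Fin d → ℂ) →ₗ[ℂ] ℂ :=
  LinearMap.comp (LinearMap.proj k)
    (Matrix.mulVecLin (star (hM.eigenvectorUnitary : Matrix (Fin d) (Fin d) ℂ)))

lemma coordFun_apply {M : Matrix (Fin d) (Fin d) ℂ} (hM : M.IsHermitian) (k : Fin d)
    (x : Fin d → ℂ) : coordFun hM k x = coords hM x k := rfl

lemma qf_sub (A B : Matrix (Fin d) (Fin d) ℂ) (x : Fin d → ℂ) :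
    qf (B - A) x = qf B x - qf A x := by
  rw [qf, qf, qf, Matrix.sub_mulVec, dotProduct_sub]
  simp

lemma qf_nonneg_of_posSemidef {E : Matrix (Fin d) (Fin d) ℂ} (hE : E.PosSemidef)
    (x : Fin d → ℂ) : 0 ≤ qf E x := by
  have := hE.dotProduct_mulVec_nonneg x
  rw [qf]
  exact (Complex.le_def.mp this).1

/-- Weyl monotonicity: if B - A is PSD then each sorted eigenvalue of A is at most that of B. -/
lemma weyl_mono {A B : Matrix (Fin d) (Fin d) ℂ} (hA : A.IsHermitian) (hB : B.IsHermitian)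
    (hE : (B - A).PosSemidef) (i : Fin d) : sortedEig hA i ≤ sortedEig hB i := by
  classical
  set πA := Tuple.sort hA.eigenvalues with hπA
  set πB := Tuple.sort hB.eigenvalues with hπB
  set K₁ : Finset (Fin d) := Finset.univ.filter (fun k => πA.symm k < i) with hK₁
  set K₂ : Finset (Fin d) := Finset.univ.filter (fun k => i < πB.symm k) with hK₂
  have hcard₁ : K₁.card = (i : ℕ) := by
    have himg : K₁ = Finset.image πA (Finset.univ.filter (fun j => j < i)) := by
      ext k
      simp only [hK₁, Finset.mem_filter, Finset.mem_univ, true_and, Finset.mem_image]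
      constructor
      · intro h; exact ⟨πA.symm k, h, Equiv.apply_symm_apply _ _⟩
      · rintro ⟨j, hj, rfl⟩; rwa [Equiv.symm_apply_apply]
    rw [himg, Finset.card_image_of_injective _ (Equiv.injective πA)]
    have : Finset.univ.filter (fun j : Fin d => j < i) = Finset.Iio i := by
      ext j; simp
    rw [this, Fin.card_Iio]
  have hcard₂ : K₂.card = d - 1 - (i : ℕ) := by
    have himg : K₂ = Finset.image πB (Finset.univ.filter (fun j => i < j)) := by
      ext k
      simp only [hK₂, Finset.mem_filter, Finset.mem_univ, true_and, Finset.mem_image]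
      constructor
      · intro h; exact ⟨πB.symm k, h, Equiv.apply_symm_apply _ _⟩
      · rintro ⟨j, hj, rfl⟩; rwa [Equiv.symm_apply_apply]
    rw [himg, Finset.card_image_of_injective _ (Equiv.injective πB)]
    have : Finset.univ.filter (fun j : Fin d => i < j) = Finset.Ioi i := by
      ext j; simp
    rw [this, Fin.card_Ioi]
  -- the functionals
  have hcardι : Fintype.card ({k // k ∈ K₁} ⊕ {k // k ∈ K₂} : Type) < d := by
    rw [Fintype.card_sum, Fintype.card_coe, Fintype.card_coe, hcard₁, hcard₂]
    have := i.isLt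
    omega
  obtain ⟨x, hx0, hxk⟩ := exists_ne_zero_in_kers hcardι
    (Sum.elim (fun k : {k // k ∈ K₁} => coordFun hA k.1)
      (fun k : {k // k ∈ K₂} => coordFun hB k.1))
  have hA0 : ∀ k ∈ K₁, coords hA x k = 0 := fun k hk => hxk (Sum.inl ⟨k, hk⟩)
  have hB0 : ∀ k ∈ K₂, coords hB x k = 0 := fun k hk => hxk (Sum.inr ⟨k, hk⟩)
  set n2 : ℝ := ∑ j, Complex.normSq (x j) with hn2
  have hn2pos : 0 < n2 := by
    obtain ⟨j, hj⟩ := Function.ne_iff.mp hx0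
    have h1 : 0 < Complex.normSq (x j) := by
      rw [Complex.normSq_pos]; exact hj
    have h2 : Complex.normSq (x j) ≤ n2 :=
      Finset.single_le_sum (fun l _ => Complex.normSq_nonneg (x l)) (Finset.mem_univ j)
    linarith
  have hlow : sortedEig hA i * n2 ≤ qf A x := by
    rw [qf_expand hA, hn2, ← sum_normSq_coords hA x, Finset.mul_sum]
    apply Finset.sum_le_sum
    intro k _
    by_cases hk : k ∈ K₁
    · rw [hA0 k hk]
      simp
    · have hge : sortedEig hA i ≤ hA.eigenvalues k := by
        have hpos : i ≤ πA.symm k := by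
          rw [hK₁] at hk
          simp only [Finset.mem_filter, Finset.mem_univ, true_and, not_lt] at hk
          exact hk
        have := sortedEig_monotone hA hpos
        rw [sortedEig, ← hπA, Function.comp_apply, Function.comp_apply,
          Equiv.apply_symm_apply] at this
        exact this
      exact mul_le_mul_of_nonneg_right hge (Complex.normSq_nonneg _)
  have hhigh : qf B x ≤ sortedEig hB i * n2 := by
    rw [qf_expand hB, hn2, ← sum_normSq_coords hB x, Finset.mul_sum]
    apply Finset.sum_le_sum
    intro k _
    by_cases hk : k ∈ K₂
    · rw [hB0 k hk]
      simp
    · have hge : hB.eigenvalues k ≤ sortedEig hB i := by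
        have hpos : πB.symm k ≤ i := by
          rw [hK₂] at hk
          simp only [Finset.mem_filter, Finset.mem_univ, true_and, not_lt] at hk
          exact hk
        have := sortedEig_monotone hB hpos
        rw [sortedEig, ← hπB, Function.comp_apply, Function.comp_apply,
          Equiv.apply_symm_apply] at this
        exact this
      exact mul_le_mul_of_nonneg_right hge (Complex.normSq_nonneg _)
  have hAB : qf A x ≤ qf B x := by
    have := qf_nonneg_of_posSemidef hE x
    rw [qf_sub] at this
    linarith
  have := le_trans hlow (le_trans hAB hhigh)
  exact le_of_mul_le_mul_right (by linarith) hn2pos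

end Weyl

section Mirsky

variable {d : ℕ} {A B : Matrix (Fin d) (Fin d) ℂ}

/-- Mirsky inequality: the ℓ¹ distance of sorted spectra is at most the trace norm of the
difference. -/
lemma mirsky_sorted (hA : A.IsHermitian) (hB : B.IsHermitian) (hC : (A - B).IsHermitian) :
    ∑ i, |sortedEig hA i - sortedEig hB i| ≤ ∑ k, |hC.eigenvalues k| := by
  classical
  set g := hC.eigenvalues with hg
  set gp : Fin d → ℝ := fun k => max (g k) 0 with hgp
  set Cp := diagConj hC gp with hCp
  have hCpPSD : Cp.PosSemidef := diagConj_posSemidef hC (fun k => le_max_right _ _)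
  set N := B + Cp with hN_def
  have hN : N.IsHermitian := hB.add hCpPSD.1
  have hNB : (N - B).PosSemidef := by
    rw [hN_def, add_sub_cancel_left]
    exact hCpPSD
  have hNA : (N - A).PosSemidef := by
    have h1 : N - A = Cp - (A - B) := by rw [hN_def]; abel
    rw [h1, ← diagConj_eigenvalues_self hC, hCp, diagConj_sub]
    apply diagConj_posSemidef
    intro k
    simp only [Pi.sub_apply, hgp]
    have := le_max_left (g k) 0
    linarith
  have hNA' : (N - A).PosSemidef := hNA
  have hwA : ∀ i, sortedEig hA i ≤ sortedEig hN i := fun i => weyl_mono hA hN hNA i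
  have hwB : ∀ i, sortedEig hB i ≤ sortedEig hN i := fun i => weyl_mono hB hN hNB i
  have habs : ∀ i, |sortedEig hA i - sortedEig hB i| ≤
      2 * sortedEig hN i - sortedEig hA i - sortedEig hB i := by
    intro i
    rw [abs_sub_le_iff]
    constructor <;> [linarith [hwA i, hwB i]; linarith [hwA i, hwB i]]
  have hsum := Finset.sum_le_sum (fun i (_ : i ∈ Finset.univ) => habs i)
  have hNtr : ∑ i, sortedEig hN i = (Matrix.trace B).re + ∑ k, gp k := by
    rw [sortedEig_sum, ← re_trace_eq_sum_eigenvalues hN, hN_def, Matrix.trace_add,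
      Complex.add_re]
    congr 1
    rw [hCp, diagConj_trace]
  have hAtr : ∑ i, sortedEig hA i = (Matrix.trace A).re := by
    rw [sortedEig_sum, ← re_trace_eq_sum_eigenvalues hA]
  have hBtr : ∑ i, sortedEig hB i = (Matrix.trace B).re := by
    rw [sortedEig_sum, ← re_trace_eq_sum_eigenvalues hB]
  have hgtr : ∑ k, g k = (Matrix.trace A).re - (Matrix.trace B).re := by
    rw [hg, ← re_trace_eq_sum_eigenvalues hC, Matrix.trace_sub, Complex.sub_re]
  have hgpid : ∀ k, 2 * gp k = |g k| + g k := by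
    intro k
    rcases le_total (g k) 0 with h | h
    · rw [hgp]
      simp only []
      rw [max_eq_right h, abs_of_nonpos h]
      ring
    · rw [hgp]
      simp only []
      rw [max_eq_left h, abs_of_nonneg h]
      ring
  have hgpsum : 2 * ∑ k, gp k = ∑ k, |g k| + ∑ k, g k := by
    rw [Finset.mul_sum, Finset.sum_congr rfl (fun k _ => hgpid k), Finset.sum_add_distrib]
  calc ∑ i, |sortedEig hA i - sortedEig hB i|
      ≤ ∑ i, (2 * sortedEig hN i - sortedEig hA i - sortedEig hB i) := hsum
    _ = 2 * ∑ i, sortedEig hN i - ∑ i, sortedEig hA i - ∑ i, sortedEig hB i := by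
        rw [Finset.sum_sub_distrib, Finset.sum_sub_distrib, ← Finset.mul_sum]
    _ = ∑ k, |g k| := by
        rw [hNtr, hAtr, hBtr]
        have := hgpsum
        rw [hgtr] at this
        linarith

/-- anti-sorted upper bound on the trace norm of the difference -/
lemma mirsky_antisorted (hA : A.IsHermitian) (hB : B.IsHermitian) (hC : (A - B).IsHermitian) :
    ∑ k, |hC.eigenvalues k| ≤ ∑ i, |sortedEig hA i - sortedEig hB (Fin.rev i)| := by
  classical
  set g := hC.eigenvalues with hg
  -- positive part
  set J : Finset (Fin d) := Finset.univ.filter (fun k => 0 < g k) with hJ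
  set J' : Finset (Fin d) := Finset.univ.filter (fun k => g k < 0) with hJ'
  have hqfg : ∀ j, qf A (mcol (hC.eigenvectorUnitary : Matrix (Fin d) (Fin d) ℂ) j) -
      qf B (mcol (hC.eigenvectorUnitary : Matrix (Fin d) (Fin d) ℂ) j) = g j := by
    intro j
    rw [← qf_sub B A, qf_col_eigenvalue hC j]
  -- sum over J of g = sum of positive parts
  have hposdecomp : ∑ k, max (g k) 0 = ∑ j ∈ J, g j := by
    rw [hJ, Finset.sum_filter]
    apply Finset.sum_congr rfl
    intro k _
    rcases le_or_gt (g k) 0 with h | h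
    · rw [max_eq_right h, if_neg (not_lt.mpr h)]
    · rw [max_eq_left h.le, if_pos h]
  have hnegdecomp : ∑ k, max (-(g k)) 0 = ∑ j ∈ J', -(g j) := by
    rw [hJ', Finset.sum_filter]
    apply Finset.sum_congr rfl
    intro k _
    rcases le_or_gt (g k) 0 with h | h
    · rcases eq_or_lt_of_le h with h' | h'
      · rw [h', if_neg (lt_irrefl 0)]
        simp
      · rw [max_eq_left (by linarith), if_pos h']
    · rw [max_eq_right (by linarith), if_neg (not_lt.mpr h.le)]
  -- reindexing by Fin.rev
  have himg : ∀ c : ℕ, (Finset.univ.filter (fun i : Fin d => d - c ≤ (i:ℕ))).image Fin.rev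
      = Finset.univ.filter (fun i : Fin d => (i:ℕ) < c) := by
    intro c
    ext i
    simp only [Finset.mem_image, Finset.mem_filter, Finset.mem_univ, true_and]
    constructor
    · rintro ⟨j, hj, rfl⟩
      rw [Fin.val_rev]
      have := j.isLt
      omega
    · intro h
      refine ⟨Fin.rev i, ?_, Fin.rev_rev i⟩
      rw [Fin.val_rev]
      have := i.isLt
      omega
  have hrevsum : ∀ (f : Fin d → ℝ) (c : ℕ),
      ∑ i ∈ Finset.univ.filter (fun i : Fin d => d - c ≤ (i:ℕ)), f (Fin.rev i)
        = ∑ i ∈ Finset.univ.filter (fun i : Fin d => (i:ℕ) < c), f i := by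
    intro f c
    rw [← himg c, Finset.sum_image (fun x _ y _ h => Fin.rev_injective h)]
  -- positive part bound
  have hpos : ∑ k, max (g k) 0 ≤
      ∑ i, max (sortedEig hA i - sortedEig hB (Fin.rev i)) 0 := by
    have h1 := kyfan_upper hA hC J
    have h2 := kyfan_lower hB hC J
    have h3 : ∑ j ∈ J, g j ≤
        ∑ i ∈ Finset.univ.filter (fun i : Fin d => d - J.card ≤ (i:ℕ)),
          (sortedEig hA i - sortedEig hB (Fin.rev i)) := by
      rw [Finset.sum_congr rfl (fun j (_ : j ∈ J) => (hqfg j).symm), Finset.sum_sub_distrib]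
      rw [Finset.sum_sub_distrib]
      have h4 := hrevsum (sortedEig hB) J.card
      linarith
    calc ∑ k, max (g k) 0 = ∑ j ∈ J, g j := hposdecomp
      _ ≤ ∑ i ∈ Finset.univ.filter (fun i : Fin d => d - J.card ≤ (i:ℕ)),
            (sortedEig hA i - sortedEig hB (Fin.rev i)) := h3
      _ ≤ ∑ i ∈ Finset.univ.filter (fun i : Fin d => d - J.card ≤ (i:ℕ)),
            max (sortedEig hA i - sortedEig hB (Fin.rev i)) 0 :=
          Finset.sum_le_sum fun i _ => le_max_left _ _
      _ ≤ ∑ i, max (sortedEig hA i - sortedEig hB (Fin.rev i)) 0 :=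
          Finset.sum_le_sum_of_subset_of_nonneg (Finset.subset_univ _)
            (fun i _ _ => le_max_right _ _)
  -- negative part bound
  have hneg : ∑ k, max (-(g k)) 0 ≤
      ∑ i, max (sortedEig hB (Fin.rev i) - sortedEig hA i) 0 := by
    have h1 := kyfan_upper hB hC J'
    have h2 := kyfan_lower hA hC J'
    have h3 : ∑ j ∈ J', -(g j) ≤
        ∑ i ∈ Finset.univ.filter (fun i : Fin d => (i:ℕ) < J'.card),
          (sortedEig hB (Fin.rev i) - sortedEig hA i) := by
      have h5 : ∑ j ∈ J', -(g j) = ∑ j ∈ J',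
          (qf B (mcol (hC.eigenvectorUnitary : Matrix (Fin d) (Fin d) ℂ) j) -
            qf A (mcol (hC.eigenvectorUnitary : Matrix (Fin d) (Fin d) ℂ) j)) := by
        apply Finset.sum_congr rfl
        intro j _
        rw [← hqfg j]
        ring
      rw [h5, Finset.sum_sub_distrib, Finset.sum_sub_distrib]
      have h4 : ∑ i ∈ Finset.univ.filter (fun i : Fin d => d - J'.card ≤ (i:ℕ)), sortedEig hB i
          = ∑ i ∈ Finset.univ.filter (fun i : Fin d => (i:ℕ) < J'.card),
              sortedEig hB (Fin.rev i) := by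
        have := hrevsum (fun i => sortedEig hB (Fin.rev i)) J'.card
        simpa [Fin.rev_rev] using this
      linarith
    calc ∑ k, max (-(g k)) 0 = ∑ j ∈ J', -(g j) := hnegdecomp
      _ ≤ ∑ i ∈ Finset.univ.filter (fun i : Fin d => (i:ℕ) < J'.card),
            (sortedEig hB (Fin.rev i) - sortedEig hA i) := h3
      _ ≤ ∑ i ∈ Finset.univ.filter (fun i : Fin d => (i:ℕ) < J'.card),
            max (sortedEig hB (Fin.rev i) - sortedEig hA i) 0 :=
          Finset.sum_le_sum fun i _ => le_max_left _ _
      _ ≤ ∑ i, max (sortedEig hB (Fin.rev i) - sortedEig hA i) 0 :=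
          Finset.sum_le_sum_of_subset_of_nonneg (Finset.subset_univ _)
            (fun i _ _ => le_max_right _ _)
  have habs_decomp : ∀ z : ℝ, |z| = max z 0 + max (-z) 0 := by
    intro z
    rcases le_total z 0 with h | h
    · rw [abs_of_nonpos h, max_eq_right h, max_eq_left (by linarith)]
      ring
    · rw [abs_of_nonneg h, max_eq_left h, max_eq_right (by linarith)]
      ring
  calc ∑ k, |g k| = ∑ k, (max (g k) 0 + max (-(g k)) 0) :=
        Finset.sum_congr rfl fun k _ => habs_decomp (g k)
    _ = ∑ k, max (g k) 0 + ∑ k, max (-(g k)) 0 := Finset.sum_add_distrib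
    _ ≤ ∑ i, max (sortedEig hA i - sortedEig hB (Fin.rev i)) 0 +
          ∑ i, max (sortedEig hB (Fin.rev i) - sortedEig hA i) 0 := add_le_add hpos hneg
    _ = ∑ i, (max (sortedEig hA i - sortedEig hB (Fin.rev i)) 0 +
          max (-(sortedEig hA i - sortedEig hB (Fin.rev i))) 0) := by
        rw [← Finset.sum_add_distrib]
        apply Finset.sum_congr rfl
        intro i _
        congr 2
        ring
    _ = ∑ i, |sortedEig hA i - sortedEig hB (Fin.rev i)| :=
        (Finset.sum_congr rfl fun i _ => (habs_decomp _)).symm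

end Mirsky

section Glue

lemma binEntropy_eq_div (t : ℝ) : _root_.binEntropy t = Real.binEntropy t / Real.log 2 := by
  rw [_root_.binEntropy, ← Real.log_div_log, ← Real.log_div_log, Real.binEntropy,
    Real.log_inv, Real.log_inv]
  ring

lemma qaryEntropy_div {D : ℕ} (hD : 2 ≤ D) (t : ℝ) :
    Real.qaryEntropy D t / Real.log 2 = t * Real.logb 2 ((D : ℝ) - 1) + _root_.binEntropy t := by
  have hL2 : (0:ℝ) < Real.log 2 := Real.log_pos (by norm_num)
  rw [Real.qaryEntropy, binEntropy_eq_div, ← Real.log_div_log]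
  have hcast : (((D:ℤ) - 1 : ℤ) : ℝ) = (D : ℝ) - 1 := by push_cast; ring
  rw [hcast]
  ring

lemma vnEntropy_eq_div {n : Type*} [Fintype n] [DecidableEq n] {M : Matrix n n ℂ}
    (hH : M.IsHermitian) :
    vnEntropy M = (∑ k, Real.negMulLog (hH.eigenvalues k)) / Real.log 2 := by
  have hL2 : (0:ℝ) < Real.log 2 := Real.log_pos (by norm_num)
  rw [vnEntropy, dif_pos hH, eq_div_iff (ne_of_gt hL2), neg_mul, Finset.sum_mul]
  have hterm : ∀ x : ℝ, x * Real.logb 2 x * Real.log 2 = -Real.negMulLog x := by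
    intro x
    rw [← Real.log_div_log, Real.negMulLog]
    field_simp
  rw [Finset.sum_congr rfl (fun k _ => hterm (hH.eigenvalues k))]
  simp

end Glue

end Aux

/-- Fannes–Audenaert inequality (base-2 entropies). -/
theorem fannes_audenaert {D : ℕ} (hD : 2 ≤ D)
    (ρ σ : Matrix (Fin D) (Fin D) ℂ)
    (hρ : IsDensityMatrix ρ) (hσ : IsDensityMatrix σ)
    (t : ℝ) (ht : traceDist ρ σ = t) :
    |vnEntropy ρ - vnEntropy σ| ≤ t * Real.logb 2 ((D : ℝ) - 1) + binEntropy t := by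
  classical
  have hL2 : (0:ℝ) < Real.log 2 := Real.log_pos (by norm_num)
  have hHρ : ρ.IsHermitian := hρ.1.1
  have hHσ : σ.IsHermitian := hσ.1.1
  have hC : (ρ - σ).IsHermitian := hHρ.sub hHσ
  set p : Fin D → ℝ := sortedEig hHρ with hp_def
  set q : Fin D → ℝ := sortedEig hHσ with hq_def
  set q' : Fin D → ℝ := fun i => sortedEig hHσ (Fin.rev i) with hq'_def
  -- nonnegativity
  have hp0 : ∀ i, 0 ≤ p i := fun i => hρ.1.eigenvalues_nonneg _
  have hq0 : ∀ i, 0 ≤ q i := fun i => hσ.1.eigenvalues_nonneg _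
  have hq'0 : ∀ i, 0 ≤ q' i := fun i => hσ.1.eigenvalues_nonneg _
  -- sums equal one
  have hpsum : ∑ i, p i = 1 := by
    rw [hp_def, sortedEig_sum, ← re_trace_eq_sum_eigenvalues hHρ, hρ.2, Complex.one_re]
  have hqsum : ∑ i, q i = 1 := by
    rw [hq_def, sortedEig_sum, ← re_trace_eq_sum_eigenvalues hHσ, hσ.2, Complex.one_re]
  have hq'sum : ∑ i, q' i = 1 := by
    rw [hq'_def]
    rw [show (∑ i, sortedEig hHσ (Fin.rev i)) = ∑ i, sortedEig hHσ i
      from Equiv.sum_comp Fin.revPerm (sortedEig hHσ)]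
    exact hqsum
  -- entropies
  have hvρ : vnEntropy ρ = (∑ i, Real.negMulLog (p i)) / Real.log 2 := by
    rw [vnEntropy_eq_div hHρ, hp_def]
    congr 1
    exact (Equiv.sum_comp (Tuple.sort hHρ.eigenvalues)
      (fun k => Real.negMulLog (hHρ.eigenvalues k))).symm
  have hvσ : vnEntropy σ = (∑ i, Real.negMulLog (q i)) / Real.log 2 := by
    rw [vnEntropy_eq_div hHσ, hq_def]
    congr 1
    exact (Equiv.sum_comp (Tuple.sort hHσ.eigenvalues)
      (fun k => Real.negMulLog (hHσ.eigenvalues k))).symm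
  have hq'ent : ∑ i, Real.negMulLog (q' i) = ∑ i, Real.negMulLog (q i) := by
    rw [hq'_def, hq_def]
    exact Equiv.sum_comp Fin.revPerm (fun i => Real.negMulLog (sortedEig hHσ i))
  -- trace distance
  have ht2 : ∑ k, |hC.eigenvalues k| = 2 * t := by
    rw [← ht, traceDist, traceNorm_hermitian hC]
    ring
  set s : ℝ := (∑ i, |p i - q i|) / 2 with hs_def
  set u : ℝ := (∑ i, |p i - q' i|) / 2 with hu_def
  have hst : s ≤ t := by
    have := mirsky_sorted hHρ hHσ hC
    rw [ht2] at this
    rw [hs_def]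
    linarith
  have htu : t ≤ u := by
    have := mirsky_antisorted hHρ hHσ hC
    rw [ht2] at this
    rw [hu_def]
    linarith
  have hs0 : 0 ≤ s := by
    rw [hs_def]
    positivity
  have hu1 : u ≤ 1 := by
    have hb : ∀ i, |p i - q' i| ≤ p i + q' i := by
      intro i
      have := abs_sub (p i) (q' i)
      rwa [abs_of_nonneg (hp0 i), abs_of_nonneg (hq'0 i)] at this
    have := Finset.sum_le_sum (fun i (_ : i ∈ Finset.univ) => hb i)
    rw [Finset.sum_add_distrib, hpsum, hq'sum] at this
    rw [hu_def]
    linarith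
  have hsu : s ≤ u := le_trans hst htu
  -- classical bounds
  have hcl1 := classical_fannes hD p q hp0 hq0 hpsum hqsum
  have hcl2 := classical_fannes hD p q' hp0 hq'0 hpsum hq'sum
  rw [hq'ent] at hcl2
  -- concavity
  have hconc : ConcaveOn ℝ (Set.Icc (0:ℝ) 1) (Real.qaryEntropy D) :=
    Real.strictConcaveOn_qaryEntropy.concaveOn
  have hmin : min (Real.qaryEntropy D s) (Real.qaryEntropy D u) ≤ Real.qaryEntropy D t := by
    apply hconc.ge_on_segment (x := s) (y := u) (z := t)
    · exact ⟨hs0, le_trans hsu hu1⟩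
    · exact ⟨le_trans hs0 hsu, hu1⟩
    · rw [segment_eq_Icc hsu]
      exact ⟨hst, htu⟩
  have habsH : |∑ i, Real.negMulLog (p i) - ∑ i, Real.negMulLog (q i)| ≤
      Real.qaryEntropy D t := by
    apply le_trans (le_min hcl1 hcl2) hmin
  -- final conversion
  rw [hvρ, hvσ, div_sub_div_same, abs_div, abs_of_pos hL2, ← qaryEntropy_div hD]
  exact div_le_div_of_nonneg_right habsH hL2.le
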